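/- Let A be the |𝒟|×|𝒟| matrix with entries A_{C,D} = 1_{C⊆D} − q_C, where 1_{C⊆D} indicates C ⊆ D and q_C = Σ_{F∈ℰ, F⊇C} p_F for some numbers (p_F)_{F∈ℰ}, ℰ the nonempty subsets of V and 𝒟 ⊆ ℰ closed under nonempty subsets. Then det A = 1 − Σ_{H∈ℰ} p_H · (Σ_{D⊆H, D∈𝒟} Σ_{C⊆D, C∈𝒟} (-1)^{|D\C|}). -/

import Mathlib

/-!
Write `Z` for the zeta matrix of `𝒟` ordered by inclusion, so that `A = Z - q 1ᵀ`. Because `𝒟` is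
closed under nonempty subsets, every interval `[C, E]` between members of `𝒟` lies in `𝒟`, so
`Z` is inverted by the Möbius matrix `W C D = [C ⊆ D] (-1)^|D \ C|` of the Boolean lattice
(multiplying by `W` is the paper's row operation). `Z` is unitriangular for the grading by
cardinality, hence `det A = det (1 - W q 1ᵀ) = 1 - 1ᵀ W q`; expanding `q` and exchanging the
sums gives the formula.
-/

open Finset Matrix

theorem Set.ordConnected_of_nonempty_subset_mem {α : Type*} {𝒟 : Set (Finset α)}
    (h𝒟 : ∀ D ∈ 𝒟, ∀ C ⊆ D, C.Nonempty → C ∈ 𝒟) : 𝒟.OrdConnected := by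
  refine ⟨fun C hC E hE D hD => ?_⟩
  obtain rfl | hne := D.eq_empty_or_nonempty
  · rwa [← subset_empty.1 hD.1]
  · exact h𝒟 E hE D hD.2 hne

section

variable {α : Type*} [DecidableEq α] {R : Type*} [CommRing R]

theorem Finset.sum_Icc_neg_one_pow_card_sdiff (s t : Finset α) :
    ∑ u ∈ Icc s t, (-1 : R) ^ #(t \ u) = if s = t then 1 else 0 := by
  by_cases hst : s ⊆ t
  · have hsum : ∑ u ∈ Icc s t, (-1 : R) ^ #(t \ u) = ∑ v ∈ (t \ s).powerset, (-1 : R) ^ #v := by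
      refine sum_nbij' (t \ ·) (t \ ·) ?_ ?_ ?_ ?_ fun _ _ => rfl
      · intro u hu
        exact mem_powerset.2 (sdiff_subset_sdiff le_rfl (mem_Icc.1 hu).1)
      · intro v hv
        have hv : v ⊆ t \ s := mem_powerset.1 hv
        exact mem_Icc.2 ⟨subset_sdiff.2 ⟨hst, (disjoint_of_subset_left hv sdiff_disjoint).symm⟩,
          sdiff_subset⟩
      · intro u hu
        exact sdiff_sdiff_eq_self (mem_Icc.1 hu).2
      · intro v hv
        exact sdiff_sdiff_eq_self ((mem_powerset.1 hv).trans sdiff_subset)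
    have hcast := congrArg (Int.cast : ℤ → R) (sum_powerset_neg_one_pow_card (x := t \ s))
    push_cast [apply_ite (Int.cast : ℤ → R)] at hcast
    rw [hsum, hcast]
    exact if_congr (sdiff_eq_empty_iff_subset.trans ⟨hst.antisymm, Eq.ge⟩) rfl rfl
  · rw [Icc_eq_empty hst, sum_empty, if_neg fun h => hst h.le]

variable (R) (𝒟 : Finset (Finset α))

def zetaMatrix : Matrix 𝒟 𝒟 R :=
  of fun C D => if (C : Finset α) ⊆ D then 1 else 0

def moebiusMatrix : Matrix 𝒟 𝒟 R :=
  of fun C D => if (C : Finset α) ⊆ D then (-1) ^ #((D : Finset α) \ C) else 0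

theorem zetaMatrix_mul_moebiusMatrix (h𝒟 : (𝒟 : Set (Finset α)).OrdConnected) :
    zetaMatrix R 𝒟 * moebiusMatrix R 𝒟 = 1 := by
  ext C E
  have hIcc : Icc (C : Finset α) E ⊆ 𝒟 := fun D hD => by
    simpa using h𝒟.out C.2 E.2 (mem_Icc.1 hD)
  calc (zetaMatrix R 𝒟 * moebiusMatrix R 𝒟) C E
      = ∑ D ∈ 𝒟, if D ∈ Icc (C : Finset α) E then (-1 : R) ^ #((E : Finset α) \ D) else 0 := by
        rw [mul_apply, ← sum_coe_sort 𝒟]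
        refine sum_congr rfl fun D _ => ?_
        simp only [zetaMatrix, moebiusMatrix, of_apply, mem_Icc, ite_mul, one_mul, zero_mul,
          ite_and]
    _ = ∑ D ∈ Icc (C : Finset α) E, (-1 : R) ^ #((E : Finset α) \ D) := by
        rw [sum_ite_mem, inter_eq_right.2 hIcc]
    _ = (1 : Matrix 𝒟 𝒟 R) C E := by
        rw [sum_Icc_neg_one_pow_card_sdiff, one_apply]
        exact if_congr Subtype.ext_iff.symm rfl rfl

theorem zetaMatrix_blockTriangular_card :
    (zetaMatrix R 𝒟).BlockTriangular fun D => #(D : Finset α) := fun _ _ hlt =>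
  if_neg fun hCD => (card_le_card hCD).not_gt hlt

theorem det_zetaMatrix : (zetaMatrix R 𝒟).det = 1 := by
  rw [(zetaMatrix_blockTriangular_card R 𝒟).det]
  refine prod_eq_one fun k _ => ?_
  suffices hblock : (zetaMatrix R 𝒟).toSquareBlock (fun D => #(D : Finset α)) k = 1 by
    rw [hblock, det_one]
  ext C D
  have hcard : #(D.1 : Finset α) ≤ #(C.1 : Finset α) := (D.2.trans C.2.symm).le
  simp only [toSquareBlock_def, zetaMatrix, of_apply, one_apply, Subtype.ext_iff]
  exact if_congr ⟨fun hCD => eq_of_subset_of_card_le hCD hcard, Eq.subset⟩ rfl rfl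

theorem one_vecMul_moebiusMatrix (D : 𝒟) :
    (1 ᵥ* moebiusMatrix R 𝒟) D =
      ∑ C ∈ 𝒟.filter (· ⊆ (D : Finset α)), (-1 : R) ^ #((D : Finset α) \ C) := by
  rw [vecMul, dotProduct, sum_filter, ← sum_coe_sort 𝒟]
  simp [moebiusMatrix]

end

theorem Matrix.det_add_replicateCol_mul_replicateRow_of_mul_eq_one {m ι R : Type*} [Fintype m]
    [DecidableEq m] [Unique ι] [CommRing R] {Z W : Matrix m m R} (h : Z * W = 1) (u v : m → R) :
    (Z + replicateCol ι u * replicateRow ι v).det = Z.det * (1 + v ⬝ᵥ W *ᵥ u) := by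
  have hfactor : Z + replicateCol ι u * replicateRow ι v
      = Z * (1 + replicateCol ι (W *ᵥ u) * replicateRow ι v) := by
    rw [mul_add, mul_one, ← Matrix.mul_assoc, ← replicateCol_mulVec, mulVec_mulVec, h, one_mulVec]
  rw [hfactor, det_mul, det_one_add_replicateCol_mul_replicateRow]

theorem det_jacobian_matrix_general
    (V : Type) [Fintype V] [DecidableEq V]
    (𝒟 : Finset (Finset V))
    (hclosed : ∀ D ∈ 𝒟, ∀ C ⊆ D, C.Nonempty → C ∈ 𝒟)
    (p : Finset V → ℝ)
    (q : Finset V → ℝ)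
    (hq : ∀ C : Finset V, q C =
      ∑ F ∈ (Finset.univ : Finset V).powerset.filter (fun F => F.Nonempty ∧ C ⊆ F), p F)
    (A : Matrix {D // D ∈ 𝒟} {D // D ∈ 𝒟} ℝ)
    (hA : ∀ C D : {D // D ∈ 𝒟},
      A C D = (if (C : Finset V) ⊆ (D : Finset V) then (1 : ℝ) else 0) - q C) :
    A.det = 1 - ∑ H ∈ (Finset.univ : Finset V).powerset.filter (fun H => H.Nonempty),
      p H * ∑ D ∈ 𝒟.filter (fun D => D ⊆ H),
        ∑ C ∈ 𝒟.filter (fun C => C ⊆ D), (-1 : ℝ) ^ ((D \ C).card) := by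
  have hA_eq : A = zetaMatrix ℝ 𝒟 +
      replicateCol Unit (fun C : 𝒟 => -q C) * replicateRow Unit (1 : 𝒟 → ℝ) := by
    ext C D
    simp [hA, zetaMatrix, sub_eq_add_neg, mul_apply, replicateCol_apply, replicateRow_apply]
  have hZW := zetaMatrix_mul_moebiusMatrix ℝ 𝒟 (Set.ordConnected_of_nonempty_subset_mem hclosed)
  rw [hA_eq, det_add_replicateCol_mul_replicateRow_of_mul_eq_one hZW, det_zetaMatrix, one_mul,
    dotProduct_mulVec, sub_eq_add_neg]
  congr 1
  set g : Finset V → ℝ := fun D => ∑ C ∈ 𝒟.filter (· ⊆ D), (-1 : ℝ) ^ #(D \ C)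
  calc (1 ᵥ* moebiusMatrix ℝ 𝒟) ⬝ᵥ (fun C => -q C) = -∑ D ∈ 𝒟, q D * g D := by
        simp [dotProduct, one_vecMul_moebiusMatrix, g, mul_comm, ← sum_coe_sort 𝒟]
    _ = _ := by
        simp_rw [hq, sum_mul]
        rw [sum_comm' (t' := univ.powerset.filter (·.Nonempty)) (s' := fun H => 𝒟.filter (· ⊆ H))]
        · simp_rw [mul_sum]
        · intro D H
          simp only [mem_filter]
          tauto

/-- Determinant of the Jacobian-type matrix `A_{C,D} = 1_{C⊆D} − q_C` with
`q_C = ∑_{F∈ℰ, F⊇C} p_F`, for a generating class `𝒟` closed under nonempty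
subsets: `det A = 1 − ∑_{H∈ℰ} p_H ∑_{D∈𝒟, D⊆H} ∑_{C∈𝒟, C⊆D} (-1)^{|D\C|}`. -/
theorem det_jacobian_matrix
    (V : Type) [Fintype V] [DecidableEq V]
    (𝒟 : Finset (Finset V))
    (hne : ∅ ∉ 𝒟)
    (hclosed : ∀ D ∈ 𝒟, ∀ C ⊆ D, C.Nonempty → C ∈ 𝒟)
    (p : Finset V → ℝ)
    (q : Finset V → ℝ)
    (hq : ∀ C : Finset V, q C =
      ∑ F ∈ (Finset.univ : Finset V).powerset.filter (fun F => F.Nonempty ∧ C ⊆ F), p F)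
    (A : Matrix {D // D ∈ 𝒟} {D // D ∈ 𝒟} ℝ)
    (hA : ∀ C D : {D // D ∈ 𝒟},
      A C D = (if (C : Finset V) ⊆ (D : Finset V) then (1 : ℝ) else 0) - q C) :
    A.det = 1 - ∑ H ∈ (Finset.univ : Finset V).powerset.filter (fun H => H.Nonempty),
      p H * ∑ D ∈ 𝒟.filter (fun D => D ⊆ H),
        ∑ C ∈ 𝒟.filter (fun C => C ⊆ D), (-1 : ℝ) ^ ((D \ C).card) :=
  det_jacobian_matrix_general V 𝒟 hclosed p q hq A hA
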